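/- Let ε ∈ (0,1) and let p > 1 be a real number. Set θ' = 2p/(2p+1) and α_p = (θ')^{2p}·p/(2p+1). Let k be a positive integer with k ≥ 8·(p/α_p)²·log(2/ε), and let k site patterns be drawn i.i.d. from the CFN quartet distribution on {α,β}^4 for topology 12|34 with edge parameter (θ')^p on each terminal edge and θ' on the interior edge. Let Y_k be the number of sampled patterns lying in {ααββ, ββαα} minus the number lying in {αβαβ, βαβα}, and let Ỹ_k be the number of sampled patterns lying in {ααββ, ββαα} minus the number lying in {αββα, βααβ}. Then ℙ(Y_k > 0 and Ỹ_k > 0) ≥ 1 − ε; that is, there exists an interior branch length x (namely x = −(1/2)log θ') for which the maximum-parsimony reconstruction probability is at least 1 − ε whenever k ≥ 8·(p/α_p)²·log(2/ε). -/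

import Mathlib

/-!
Each sampled site contributes `+1`, `0` or `-1` to `Y_k` (and to `Ỹ_k`), with mean
`μ = t²(1 - θ)/2 > 0`, where `θ` is the interior and `t = θ^p` the terminal edge parameter.
A Chernoff bound with exponent `μ` bounds the probability that such a sum is `≤ 0` by
`exp(-kμ²/2)`: bounding `exp(-μx)` on `{-1,0,1}` by its chord gives the moment bound
`cosh μ - μ sinh μ ≤ 1 - μ²/2 ≤ exp(-μ²/2)`. The sample-size hypothesis is exactly
`k ≥ (2/μ²) log(2/ε)`, so each failure probability is at most `ε/2`, and a union bound finishes.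
-/

open scoped BigOperators

/-- The CFN transition matrix with edge parameter `η`. -/
noncomputable def cfnM (η : ℝ) (a b : Bool) : ℝ :=
  if a = b then (1 + η) / 2 else (1 - η) / 2

/-- The CFN quartet distribution on `{α,β}^4` for the topology `12|34`, with interior edge
parameter `ηint` and common terminal edge parameter `ηterm`. -/
noncomputable def cfnQuartet12_34 (ηint ηterm : ℝ) (s : Fin 4 → Bool) : ℝ :=
  ∑ u : Bool, ∑ v : Bool,
    (1 / 2) * cfnM ηint u v * cfnM ηterm u (s 0) * cfnM ηterm u (s 1) *
      cfnM ηterm v (s 2) * cfnM ηterm v (s 3)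

/-- `+1` if the site pattern lies in the class `{ααββ, ββαα}`, `-1` if it lies in the class
`{αβαβ, βαβα}`, and `0` otherwise. -/
def scoreVs13_24 (s : Fin 4 → Bool) : ℤ :=
  (if s 0 = s 1 ∧ s 2 = s 3 ∧ s 0 ≠ s 2 then 1 else 0) -
    (if s 0 = s 2 ∧ s 1 = s 3 ∧ s 0 ≠ s 1 then 1 else 0)

/-- `+1` if the site pattern lies in the class `{ααββ, ββαα}`, `-1` if it lies in the class
`{αββα, βααβ}`, and `0` otherwise. -/
def scoreVs14_23 (s : Fin 4 → Bool) : ℤ :=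
  (if s 0 = s 1 ∧ s 2 = s 3 ∧ s 0 ≠ s 2 then 1 else 0) -
    (if s 0 = s 3 ∧ s 1 = s 2 ∧ s 0 ≠ s 1 then 1 else 0)

open Finset Real

theorem sum_fin_succ_pi {α M : Type*} [Fintype α] [AddCommMonoid M] {n : ℕ}
    (f : (Fin (n + 1) → α) → M) :
    ∑ s, f s = ∑ a, ∑ s : Fin n → α, f (Matrix.vecCons a s) := by
  rw [← Fintype.sum_prod_type']
  exact (Fintype.sum_equiv (Fin.consEquiv fun _ => α) _ _ fun _ => rfl).symm

theorem exp_neg_mul_le_cosh_sub_mul_sinh (μ : ℝ) {x : ℤ} (hx : |x| ≤ 1) :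
    exp (-(μ * x)) ≤ cosh μ - x * sinh μ := by
  rcases Int.abs_le_one_iff.mp hx with rfl | rfl | rfl
  · simp
  · simp [cosh_sub_sinh]
  · simp [cosh_add_sinh]

theorem cosh_sub_mul_sinh_le (μ : ℝ) : cosh μ - μ * sinh μ ≤ 1 - μ ^ 2 / 2 := by
  wlog hμ : 0 ≤ μ generalizing μ
  · simpa [cosh_neg, sinh_neg] using this (-μ) (by linarith)
  let f : ℝ → ℝ := fun x => 1 - x ^ 2 / 2 - cosh x + x * sinh x
  have hf : ∀ x, HasDerivAt f (x * (cosh x - 1)) x := fun x =>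
    ((((hasDerivAt_pow 2 x).div_const 2).const_sub 1).sub (hasDerivAt_cosh x)).add
      ((hasDerivAt_id' x).mul (hasDerivAt_sinh x)) |>.congr_deriv (by push_cast; ring)
  have hmono : MonotoneOn f (Set.Ici 0) :=
    monotoneOn_of_hasDerivWithinAt_nonneg (convex_Ici 0)
      (fun x _ => (hf x).continuousAt.continuousWithinAt)
      (fun x _ => (hf x).hasDerivWithinAt)
      (fun x hx => by
        rw [interior_Ici] at hx
        exact mul_nonneg (le_of_lt hx) (sub_nonneg.2 (one_le_cosh x)))
  have := hmono Set.self_mem_Ici hμ hμ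
  simp only [f, cosh_zero, sinh_zero] at this
  linarith

section IIDSample

variable {α : Type*} [Fintype α] {q : α → ℝ}

def iidMass (q : α → ℝ) (k : ℕ) (E : (Fin k → α) → Prop) [DecidablePred E] : ℝ :=
  ∑ ω : Fin k → α, if E ω then ∏ i, q (ω i) else 0

theorem one_sub_iidMass_not_sub_le_iidMass_and (hq0 : ∀ a, 0 ≤ q a) (hq1 : ∑ a, q a = 1)
    (k : ℕ) (P Q : (Fin k → α) → Prop) [DecidablePred P] [DecidablePred Q] :
    1 - iidMass q k (fun ω => ¬ P ω) - iidMass q k (fun ω => ¬ Q ω) ≤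
      iidMass q k (fun ω => P ω ∧ Q ω) := by
  have htotal : ∑ ω : Fin k → α, ∏ i, q (ω i) = 1 := by
    rw [← Fintype.sum_pow, hq1, one_pow]
  rw [← htotal, iidMass, iidMass, iidMass, ← sum_sub_distrib, ← sum_sub_distrib]
  refine sum_le_sum fun ω _ => ?_
  have := prod_nonneg fun i (_ : i ∈ univ) => hq0 (ω i)
  split_ifs <;> first | linarith | tauto

theorem iidMass_sum_nonpos_le_pow (hq0 : ∀ a, 0 ≤ q a) (X : α → ℤ) {c : ℝ} (hc : 0 ≤ c)
    (k : ℕ) :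
    iidMass q k (fun ω => ¬ 0 < ∑ i, X (ω i)) ≤ (∑ a, q a * exp (-(c * X a))) ^ k := by
  rw [Fintype.sum_pow, iidMass]
  refine sum_le_sum fun ω _ => ?_
  have hprod : ∏ i, (q (ω i) * exp (-(c * X (ω i)))) =
      (∏ i, q (ω i)) * exp (-(c * ((∑ i, X (ω i) : ℤ) : ℝ))) := by
    rw [prod_mul_distrib, ← exp_sum]
    push_cast
    rw [mul_sum, sum_neg_distrib]
  rw [hprod]
  have hq : 0 ≤ ∏ i, q (ω i) := prod_nonneg fun i _ => hq0 (ω i)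
  split_ifs with hS
  · positivity
  · refine le_mul_of_one_le_right hq (one_le_exp ?_)
    have : ((∑ i, X (ω i) : ℤ) : ℝ) ≤ 0 := by exact_mod_cast not_lt.mp hS
    nlinarith

theorem sum_mul_exp_neg_le (hq0 : ∀ a, 0 ≤ q a) (hq1 : ∑ a, q a = 1) {X : α → ℤ}
    (hX : ∀ a, |X a| ≤ 1) {μ : ℝ} (hmean : ∑ a, X a * q a = μ) :
    ∑ a, q a * exp (-(μ * X a)) ≤ exp (-(μ ^ 2 / 2)) :=
  calc ∑ a, q a * exp (-(μ * X a))
      ≤ ∑ a, q a * (cosh μ - X a * sinh μ) :=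
        sum_le_sum fun a _ =>
          mul_le_mul_of_nonneg_left (exp_neg_mul_le_cosh_sub_mul_sinh μ (hX a)) (hq0 a)
    _ = (∑ a, q a) * cosh μ - (∑ a, X a * q a) * sinh μ := by
        simp only [sum_mul, ← sum_sub_distrib]
        exact sum_congr rfl fun a _ => by ring
    _ = cosh μ - μ * sinh μ := by rw [hq1, hmean, one_mul]
    _ ≤ 1 - μ ^ 2 / 2 := cosh_sub_mul_sinh_le μ
    _ ≤ exp (-(μ ^ 2 / 2)) := by linarith [add_one_le_exp (-(μ ^ 2 / 2))]

theorem iidMass_sum_nonpos_le_exp (hq0 : ∀ a, 0 ≤ q a) (hq1 : ∑ a, q a = 1) {X : α → ℤ}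
    (hX : ∀ a, |X a| ≤ 1) {μ : ℝ} (hμ : 0 ≤ μ) (hmean : ∑ a, X a * q a = μ) (k : ℕ) :
    iidMass q k (fun ω => ¬ 0 < ∑ i, X (ω i)) ≤ exp (-(k * μ ^ 2 / 2)) :=
  calc iidMass q k (fun ω => ¬ 0 < ∑ i, X (ω i))
      ≤ (∑ a, q a * exp (-(μ * X a))) ^ k := iidMass_sum_nonpos_le_pow hq0 X hμ k
    _ ≤ exp (-(μ ^ 2 / 2)) ^ k :=
        pow_le_pow_left₀ (sum_nonneg fun a _ => mul_nonneg (hq0 a) (exp_pos _).le)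
          (sum_mul_exp_neg_le hq0 hq1 hX hmean) k
    _ = exp (-(k * μ ^ 2 / 2)) := by rw [← exp_nat_mul]; ring_nf

end IIDSample

theorem exp_neg_mul_sq_div_two_le_half {ε μ k : ℝ} (hε : 0 < ε) (hμ : 0 < μ)
    (hk : k ≥ 2 / μ ^ 2 * log (2 / ε)) :
    exp (-(k * μ ^ 2 / 2)) ≤ ε / 2 := by
  have hlog : log (2 / ε) ≤ k * μ ^ 2 / 2 := by
    have := mul_le_mul_of_nonneg_right hk (by positivity : (0 : ℝ) ≤ μ ^ 2 / 2)
    field_simp at this ⊢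
    linarith
  calc exp (-(k * μ ^ 2 / 2)) ≤ exp (-log (2 / ε)) := exp_le_exp.2 (neg_le_neg hlog)
    _ = ε / 2 := by rw [exp_neg, exp_log (by positivity), inv_div]

theorem cfnM_nonneg {η : ℝ} (hη : |η| ≤ 1) (a b : Bool) : 0 ≤ cfnM η a b := by
  rw [abs_le] at hη
  unfold cfnM
  split_ifs <;> linarith

theorem cfnQuartet12_34_nonneg {ηint ηterm : ℝ} (hint : |ηint| ≤ 1) (hterm : |ηterm| ≤ 1)
    (s : Fin 4 → Bool) : 0 ≤ cfnQuartet12_34 ηint ηterm s :=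
  sum_nonneg fun u _ => sum_nonneg fun v _ => by
    have := cfnM_nonneg hint u v
    have := cfnM_nonneg hterm u (s 0)
    have := cfnM_nonneg hterm u (s 1)
    have := cfnM_nonneg hterm v (s 2)
    have := cfnM_nonneg hterm v (s 3)
    positivity

theorem sum_cfnQuartet12_34 (ηint ηterm : ℝ) : ∑ s, cfnQuartet12_34 ηint ηterm s = 1 := by
  simp only [sum_fin_succ_pi, Fintype.sum_unique, Fintype.sum_bool, cfnQuartet12_34, cfnM,
    Matrix.cons_val, Matrix.cons_val_zero, Matrix.cons_val_one, Matrix.cons_val_fin_one,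
    Bool.true_eq_false, Bool.false_eq_true, ↓reduceIte]
  ring

theorem sum_scoreVs13_24_mul_cfnQuartet12_34 (ηint ηterm : ℝ) :
    ∑ s, (scoreVs13_24 s : ℝ) * cfnQuartet12_34 ηint ηterm s = ηterm ^ 2 * (1 - ηint) / 2 := by
  simp only [sum_fin_succ_pi, Fintype.sum_unique, Fintype.sum_bool, cfnQuartet12_34, cfnM,
    Matrix.cons_val, Matrix.cons_val_zero, Matrix.cons_val_one, Matrix.cons_val_fin_one,
    Bool.true_eq_false, Bool.false_eq_true, ↓reduceIte, scoreVs13_24, ne_eq, and_self, and_true,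
    and_false, false_and, true_and, not_true, not_false_eq_true, Int.cast_sub, Int.cast_one,
    Int.cast_zero]
  ring

theorem sum_scoreVs14_23_mul_cfnQuartet12_34 (ηint ηterm : ℝ) :
    ∑ s, (scoreVs14_23 s : ℝ) * cfnQuartet12_34 ηint ηterm s = ηterm ^ 2 * (1 - ηint) / 2 := by
  simp only [sum_fin_succ_pi, Fintype.sum_unique, Fintype.sum_bool, cfnQuartet12_34, cfnM,
    Matrix.cons_val, Matrix.cons_val_zero, Matrix.cons_val_one, Matrix.cons_val_fin_one,
    Bool.true_eq_false, Bool.false_eq_true, ↓reduceIte, scoreVs14_23, ne_eq, and_self, and_true,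
    and_false, false_and, true_and, not_true, not_false_eq_true, Int.cast_sub, Int.cast_one,
    Int.cast_zero]
  ring

theorem abs_scoreVs13_24_le_one : ∀ s, |scoreVs13_24 s| ≤ 1 := by decide

theorem abs_scoreVs14_23_le_one : ∀ s, |scoreVs14_23 s| ≤ 1 := by decide

theorem opt_theta_sample_constant_eq {p : ℝ} (hp : 0 < p) :
    8 * (p / ((2 * p / (2 * p + 1)) ^ (2 * p) * (p / (2 * p + 1)))) ^ 2 =
      2 / (((2 * p / (2 * p + 1)) ^ p) ^ 2 * (1 - 2 * p / (2 * p + 1)) / 2) ^ 2 := by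
  have hθ : 0 < 2 * p / (2 * p + 1) := by positivity
  have hsq : (2 * p / (2 * p + 1)) ^ (2 * p) = ((2 * p / (2 * p + 1)) ^ p) ^ 2 := by
    rw [← rpow_mul_natCast hθ.le]
    ring_nf
  rw [hsq]
  have : 0 < (2 * p / (2 * p + 1)) ^ p := rpow_pos_of_pos hθ p
  field_simp
  ring

theorem mp_reconstruction_prob_at_opt_theta_general (ε p : ℝ) (hε : ε ∈ Set.Ioo (0 : ℝ) 1)
    (hp : 1 < p) (k : ℕ)
    (hklb : (k : ℝ) ≥
      8 * (p / ((2 * p / (2 * p + 1)) ^ (2 * p) * (p / (2 * p + 1)))) ^ 2 *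
        Real.log (2 / ε)) :
    1 - ε ≤
      ∑ ω : Fin k → Fin 4 → Bool,
        (if 0 < ∑ i : Fin k, scoreVs13_24 (ω i) ∧ 0 < ∑ i : Fin k, scoreVs14_23 (ω i) then
          ∏ i : Fin k, cfnQuartet12_34 (2 * p / (2 * p + 1)) ((2 * p / (2 * p + 1)) ^ p) (ω i)
        else 0) := by
  have hp0 : 0 < p := by linarith
  rw [opt_theta_sample_constant_eq hp0] at hklb
  set θ := 2 * p / (2 * p + 1)
  set t := θ ^ p
  have hθ0 : 0 < θ := by positivity
  have hθ1 : θ < 1 := (div_lt_one (by linarith)).2 (by linarith)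
  have ht : |t| ≤ 1 := abs_le.2 ⟨by linarith [rpow_pos_of_pos hθ0 p],
    rpow_le_one hθ0.le hθ1.le hp0.le⟩
  set μ := t ^ 2 * (1 - θ) / 2
  have hμ : 0 < μ := by
    have : 0 < t := rpow_pos_of_pos hθ0 p
    have : 0 < 1 - θ := by linarith
    positivity
  have hq0 := cfnQuartet12_34_nonneg (abs_le.2 ⟨by linarith, hθ1.le⟩) ht
  have hq1 := sum_cfnQuartet12_34 θ t
  have hfail13 := iidMass_sum_nonpos_le_exp hq0 hq1 abs_scoreVs13_24_le_one hμ.le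
    (sum_scoreVs13_24_mul_cfnQuartet12_34 θ t) k
  have hfail14 := iidMass_sum_nonpos_le_exp hq0 hq1 abs_scoreVs14_23_le_one hμ.le
    (sum_scoreVs14_23_mul_cfnQuartet12_34 θ t) k
  have htail := exp_neg_mul_sq_div_two_le_half hε.1 hμ hklb
  calc 1 - ε ≤ iidMass (cfnQuartet12_34 θ t) k
        (fun ω => 0 < ∑ i, scoreVs13_24 (ω i) ∧ 0 < ∑ i, scoreVs14_23 (ω i)) := by
        linarith [one_sub_iidMass_not_sub_le_iidMass_and hq0 hq1 k
          (fun ω => 0 < ∑ i, scoreVs13_24 (ω i)) (fun ω => 0 < ∑ i, scoreVs14_23 (ω i))]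
    _ = _ := rfl

/-- Non-asymptotic form of **Theorem 2 of the paper**: with the interior edge parameter
`θ' = 2p/(2p+1)` (i.e. interior branch length `x = -(1/2)·log θ'`), and
`α_p = (θ')^{2p}·p/(2p+1)`, maximum parsimony recovers the true topology `12|34` from
`k ≥ 8·(p/α_p)²·log(2/ε)` i.i.d. CFN sites with probability at least `1 - ε`. -/
theorem mp_reconstruction_prob_at_opt_theta (ε p : ℝ) (hε : ε ∈ Set.Ioo (0 : ℝ) 1)
    (hp : 1 < p) (k : ℕ) (hk : 0 < k)
    (hklb : (k : ℝ) ≥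
      8 * (p / ((2 * p / (2 * p + 1)) ^ (2 * p) * (p / (2 * p + 1)))) ^ 2 *
        Real.log (2 / ε)) :
    1 - ε ≤
      ∑ ω : Fin k → Fin 4 → Bool,
        (if 0 < ∑ i : Fin k, scoreVs13_24 (ω i) ∧ 0 < ∑ i : Fin k, scoreVs14_23 (ω i) then
          ∏ i : Fin k, cfnQuartet12_34 (2 * p / (2 * p + 1)) ((2 * p / (2 * p + 1)) ^ p) (ω i)
        else 0) :=
  mp_reconstruction_prob_at_opt_theta_general ε p hε hp k hklb
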